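/- arXiv:1910.13741 — 2 statements merged into one kernel-verified Lean document; each statement's English description precedes it below -/
import Mathlib

section
/- Let Φ : 𝔻 × 𝔻* → ℍ be the biholomorphism Φ(w₁,w₂) = (w₁w₂, w₂). The map f ↦ f∘Φ is a surjective isometry from the Dirichlet space D(ℍ) onto the Dirichlet space D(𝔻×𝔻) of the bidisc: if f(z₁,z₂) = Σ_{j≥0} Σ_{k≥−j} a_{jk} z₁^j z₂^k ∈ D(ℍ), then f∘Φ (which has only nonnegative powers of w₂ and hence extends holomorphically to 𝔻×𝔻) satisfies ‖f∘Φ‖²_{D(𝔻×𝔻)} = ‖f‖²_{D(ℍ)}, and every g ∈ D(𝔻×𝔻) arises as f∘Φ for some f ∈ D(ℍ). -/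
/-!
Since `Φ` pulls `z₁ʲ z₂ᵏ` back to `w₁ʲ w₂^(j+k)`, composing with `Φ` only reindexes the
coefficients by `(j, k) ↦ (j, j + k)`, a bijection from `{k ≥ -j}` onto `ℕ × ℕ` that carries the
weight `(j+1)(j+k+1)` to `(j+1)(k+1)`. The analytic input is that a square-summable family with
weights `≥ 1` is bounded, so the bidisc series converges absolutely together with its termwise
derivatives, locally uniformly on `𝔻 × 𝔻`, and is holomorphic there. Surjectivity composes with
`Φ⁻¹(z) = (z₁/z₂, z₂)`.
-/

open MeasureTheory Real Complex Set Filter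
open scoped ENNReal

noncomputable section

/-- The Hartogs triangle `ℍ = {(z₁,z₂) ∈ ℂ² : |z₁| < |z₂| < 1}`. -/
def Hartogs : Set (ℂ × ℂ) := {z | ‖z.1‖ < ‖z.2‖ ∧ ‖z.2‖ < 1}

/-- The bidisc `𝔻 × 𝔻`. -/
def diskProd : Set (ℂ × ℂ) := {w | ‖w.1‖ < 1 ∧ ‖w.2‖ < 1}

/-- `𝔻 × 𝔻*`, the disc times the punctured disc. -/
def diskPunct : Set (ℂ × ℂ) := {w | ‖w.1‖ < 1 ∧ ‖w.2‖ < 1 ∧ w.2 ≠ 0}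

/-- The biholomorphism `Φ : 𝔻 × 𝔻* → ℍ`, `Φ(w₁,w₂) = (w₁w₂, w₂)`. -/
def Phi (w : ℂ × ℂ) : ℂ × ℂ := (w.1 * w.2, w.2)

/-- `Φ` pulls `z₁ʲ z₂^(k-j)` back to `w₁ʲ w₂ᵏ`. -/
def shear (p : ℕ × ℕ) : ℕ × ℤ := (p.1, (p.2 : ℤ) - p.1)

lemma shear_injective : Function.Injective shear := by
  rintro ⟨j, k⟩ ⟨j', k'⟩ h
  simp only [shear, Prod.mk.injEq] at h
  ext <;> omega

lemma notMem_range_shear_iff {x : ℕ × ℤ} : x ∉ range shear ↔ x.2 < -(x.1 : ℤ) := by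
  refine not_iff_comm.1 ⟨fun hx => ⟨(x.1, (x.2 + x.1).toNat), ?_⟩, ?_⟩
  · ext <;> simp [shear]; omega
  · rintro ⟨p, rfl⟩
    simp [shear]

lemma mul_pow_mul_zpow_natCast_sub {z₁ z₂ : ℂ} (hz₂ : z₂ ≠ 0) (j k : ℕ) :
    (z₁ * z₂) ^ j * z₂ ^ ((k : ℤ) - j) = z₁ ^ j * z₂ ^ k := by
  rw [zpow_sub₀ hz₂, zpow_natCast, zpow_natCast, mul_pow]
  field_simp

def hartogsDirichletTerm (a : ℕ × ℤ → ℂ) (x : ℕ × ℤ) : ℝ :=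
  ((x.1 : ℝ) + 1) * ((x.1 : ℝ) + (x.2 : ℝ) + 1) * ‖a x‖ ^ 2

def bidiscDirichletTerm (b : ℕ × ℕ → ℂ) (p : ℕ × ℕ) : ℝ :=
  ((p.1 : ℝ) + 1) * ((p.2 : ℝ) + 1) * ‖b p‖ ^ 2

lemma hartogsDirichletTerm_comp_shear (a : ℕ × ℤ → ℂ) :
    hartogsDirichletTerm a ∘ shear = bidiscDirichletTerm (a ∘ shear) := by
  ext p
  simp only [Function.comp_apply, hartogsDirichletTerm, bidiscDirichletTerm, shear]
  push_cast
  ring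

lemma exists_comp_shear_eq (b : ℕ × ℕ → ℂ) :
    ∃ a : ℕ × ℤ → ℂ, a ∘ shear = b ∧ ∀ x : ℕ × ℤ, x.2 < -(x.1 : ℤ) → a x = 0 :=
  ⟨Function.extend shear b 0, Function.extend_comp shear_injective b _, fun x hx =>
    Function.extend_apply' b _ x (notMem_range_shear_iff.2 hx)⟩

section HartogsCoefficients

variable {a : ℕ × ℤ → ℂ} (ha : ∀ x : ℕ × ℤ, x.2 < -(x.1 : ℤ) → a x = 0)
include ha

lemma hartogsDirichletTerm_eq_zero_of_notMem {x : ℕ × ℤ} (hx : x ∉ range shear) :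
    hartogsDirichletTerm a x = 0 := by
  simp [hartogsDirichletTerm, ha x (notMem_range_shear_iff.1 hx)]

lemma summable_bidiscDirichletTerm_comp_shear_iff :
    Summable (bidiscDirichletTerm (a ∘ shear)) ↔ Summable (hartogsDirichletTerm a) := by
  rw [← hartogsDirichletTerm_comp_shear]
  exact shear_injective.summable_iff fun x hx => hartogsDirichletTerm_eq_zero_of_notMem ha hx

lemma tsum_bidiscDirichletTerm_comp_shear :
    ∑' p, bidiscDirichletTerm (a ∘ shear) p = ∑' x, hartogsDirichletTerm a x := by
  rw [← hartogsDirichletTerm_comp_shear]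
  exact shear_injective.tsum_eq fun x hx =>
    Classical.byContradiction fun h => hx (hartogsDirichletTerm_eq_zero_of_notMem ha h)

lemma hasSum_comp_Phi_iff {w : ℂ × ℂ} (hw : w.2 ≠ 0) {s : ℂ} :
    HasSum (fun x : ℕ × ℤ => a x * (Phi w).1 ^ x.1 * (Phi w).2 ^ x.2) s ↔
      HasSum (fun p : ℕ × ℕ => (a ∘ shear) p * w.1 ^ p.1 * w.2 ^ p.2) s := by
  rw [← shear_injective.hasSum_iff fun x hx => by simp [ha x (notMem_range_shear_iff.1 hx)]]
  refine Iff.of_eq (congrArg (HasSum · s) (funext fun p => ?_))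
  simp only [Function.comp_apply, Phi, shear, mul_assoc, mul_pow_mul_zpow_natCast_sub hw]

end HartogsCoefficients

lemma exists_norm_le_of_summable_mul_sq {ι E : Type*} [SeminormedAddCommGroup E] {c : ι → E}
    {w : ι → ℝ} (hw : ∀ i, 1 ≤ w i) (hs : Summable fun i => w i * ‖c i‖ ^ 2) :
    ∃ C, ∀ i, ‖c i‖ ≤ C := by
  refine ⟨√(∑' i, w i * ‖c i‖ ^ 2), fun i => Real.le_sqrt_of_sq_le ?_⟩
  calc ‖c i‖ ^ 2 ≤ w i * ‖c i‖ ^ 2 := le_mul_of_one_le_left (by positivity) (hw i)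
    _ ≤ ∑' i, w i * ‖c i‖ ^ 2 :=
      hs.le_tsum i fun j _ => mul_nonneg (zero_le_one.trans (hw j)) (by positivity)

lemma summable_natCast_mul_pow_sub_one {r : ℝ} (hr₀ : 0 ≤ r) (hr₁ : r < 1) :
    Summable fun n : ℕ => (n : ℝ) * r ^ (n - 1) := by
  rw [← summable_nat_add_iff 1]
  have hr : ‖r‖ < 1 := by rwa [Real.norm_of_nonneg hr₀]
  refine ((summable_pow_mul_geometric_of_norm_lt_one 1 hr).add
    (summable_geometric_of_lt_one hr₀ hr₁)).congr fun n => ?_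
  push_cast
  simp only [pow_one]
  ring

lemma summable_norm_coeff_mul_pow_mul_pow {b : ℕ × ℕ → ℂ} {C : ℝ} (hb : ∀ p, ‖b p‖ ≤ C)
    {w : ℂ × ℂ} (hw : ‖w‖ < 1) :
    Summable fun p : ℕ × ℕ => ‖b p * w.1 ^ p.1 * w.2 ^ p.2‖ := by
  have geom : Summable fun n : ℕ => ‖w‖ ^ n := summable_geometric_of_lt_one (norm_nonneg _) hw
  refine Summable.of_nonneg_of_le (fun _ => norm_nonneg _) (fun p => ?_)
    ((geom.mul_of_nonneg geom (fun _ => by positivity) (fun _ => by positivity)).mul_left C)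
  rw [norm_mul, norm_mul, norm_pow, norm_pow, mul_assoc]
  have hC : 0 ≤ C := (norm_nonneg _).trans (hb p)
  gcongr
  exacts [hb p, norm_fst_le w, norm_snd_le w]

open ContinuousLinearMap in
def monomialFDeriv (j k : ℕ) (x : ℂ × ℂ) : ℂ × ℂ →L[ℂ] ℂ :=
  x.1 ^ j • ((k : ℂ) * x.2 ^ (k - 1)) • snd ℂ ℂ ℂ + x.2 ^ k • ((j : ℂ) * x.1 ^ (j - 1)) • fst ℂ ℂ ℂ

lemma hasFDerivAt_fst_pow_mul_snd_pow (j k : ℕ) (x : ℂ × ℂ) :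
    HasFDerivAt (fun y : ℂ × ℂ => y.1 ^ j * y.2 ^ k) (monomialFDeriv j k x) x :=
  ((hasDerivAt_pow j x.1).comp_hasFDerivAt x hasFDerivAt_fst).mul
    ((hasDerivAt_pow k x.2).comp_hasFDerivAt x hasFDerivAt_snd)

lemma norm_monomialFDeriv_le (j k : ℕ) {x : ℂ × ℂ} {r : ℝ} (hx : ‖x‖ ≤ r) :
    ‖monomialFDeriv j k x‖ ≤ r ^ j * (k * r ^ (k - 1)) + r ^ k * (j * r ^ (j - 1)) := by
  have h₁ : ‖x.1‖ ≤ r := (norm_fst_le x).trans hx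
  have h₂ : ‖x.2‖ ≤ r := (norm_snd_le x).trans hx
  have hr : 0 ≤ r := (norm_nonneg x).trans hx
  refine (norm_add_le _ _).trans ?_
  simp only [norm_smul, norm_mul, norm_pow, Complex.norm_natCast]
  calc _ ≤ ‖x.1‖ ^ j * (k * ‖x.2‖ ^ (k - 1) * 1) + ‖x.2‖ ^ k * (j * ‖x.1‖ ^ (j - 1) * 1) := by
        gcongr
        exacts [ContinuousLinearMap.norm_snd_le ℂ ℂ ℂ, ContinuousLinearMap.norm_fst_le ℂ ℂ ℂ]
    _ ≤ _ := by simp only [mul_one]; gcongr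

lemma diskProd_eq_ball : diskProd = Metric.ball (0 : ℂ × ℂ) 1 := by
  ext w
  simp [diskProd, Prod.norm_def]

lemma differentiableOn_tsum_coeff_mul_pow_mul_pow {b : ℕ × ℕ → ℂ} {C : ℝ}
    (hb : ∀ p, ‖b p‖ ≤ C) :
    DifferentiableOn ℂ (fun w : ℂ × ℂ => ∑' p : ℕ × ℕ, b p * w.1 ^ p.1 * w.2 ^ p.2) diskProd := by
  rw [diskProd_eq_ball]
  intro w hw
  rw [mem_ball_zero_iff] at hw
  obtain ⟨r, hwr, hr₁⟩ := exists_between hw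
  have hr₀ : 0 ≤ r := (norm_nonneg w).trans hwr.le
  have hj := summable_natCast_mul_pow_sub_one hr₀ hr₁
  have geom := summable_geometric_of_lt_one hr₀ hr₁
  -- on the polydisc of radius `r` the termwise derivatives have a summable majorant
  have hu : Summable fun p : ℕ × ℕ =>
      C * (r ^ p.1 * (p.2 * r ^ (p.2 - 1)) + r ^ p.2 * (p.1 * r ^ (p.1 - 1))) :=
    ((geom.mul_of_nonneg hj (fun _ => by positivity) (fun _ => by positivity)).add
      ((hj.mul_of_nonneg geom (fun _ => by positivity) (fun _ => by positivity)).congr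
        fun _ => mul_comm _ _)).mul_left C
  have hw₀ : w ∈ Metric.ball 0 r := mem_ball_zero_iff.2 hwr
  refine (hasFDerivAt_tsum_of_isPreconnected (f' := fun p x => b p • monomialFDeriv p.1 p.2 x)
    hu Metric.isOpen_ball (convex_ball 0 r).isPreconnected (fun p x _ => ?_) (fun p x hx => ?_)
    hw₀ (summable_norm_coeff_mul_pow_mul_pow hb hw).of_norm hw₀).differentiableAt
    |>.differentiableWithinAt
  · simpa only [mul_assoc] using (hasFDerivAt_fst_pow_mul_snd_pow p.1 p.2 x).const_mul (b p)
  · rw [norm_smul]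
    exact mul_le_mul (hb p) (norm_monomialFDeriv_le p.1 p.2
      (mem_ball_zero_iff.1 hx).le) (norm_nonneg _) ((norm_nonneg _).trans (hb p))

lemma exists_norm_le_of_summable_bidiscDirichletTerm {b : ℕ × ℕ → ℂ}
    (hb : Summable (bidiscDirichletTerm b)) : ∃ C, ∀ p, ‖b p‖ ≤ C :=
  exists_norm_le_of_summable_mul_sq (c := b) (w := fun p => ((p.1 : ℝ) + 1) * ((p.2 : ℝ) + 1))
    (fun p => one_le_mul_of_one_le_of_one_le (by simp) (by simp)) hb

lemma hasSum_coeff_mul_pow_mul_pow {b : ℕ × ℕ → ℂ} {C : ℝ} (hb : ∀ p, ‖b p‖ ≤ C) {w : ℂ × ℂ}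
    (hw : w ∈ diskProd) :
    HasSum (fun p : ℕ × ℕ => b p * w.1 ^ p.1 * w.2 ^ p.2)
      (∑' p : ℕ × ℕ, b p * w.1 ^ p.1 * w.2 ^ p.2) := by
  rw [diskProd_eq_ball, mem_ball_zero_iff] at hw
  exact (summable_norm_coeff_mul_pow_mul_pow hb hw).of_norm.hasSum

def PhiInv (z : ℂ × ℂ) : ℂ × ℂ := (z.1 / z.2, z.2)

lemma Phi_PhiInv {z : ℂ × ℂ} (hz : z.2 ≠ 0) : Phi (PhiInv z) = z := by
  simp [Phi, PhiInv, div_mul_cancel₀ _ hz]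

lemma PhiInv_Phi {w : ℂ × ℂ} (hw : w.2 ≠ 0) : PhiInv (Phi w) = w := by
  simp [Phi, PhiInv, mul_div_cancel_right₀ _ hw]

lemma snd_ne_zero_of_mem_Hartogs {z : ℂ × ℂ} (hz : z ∈ Hartogs) : z.2 ≠ 0 :=
  norm_pos_iff.1 ((norm_nonneg _).trans_lt hz.1)

lemma mapsTo_Phi : MapsTo Phi diskPunct Hartogs := fun w ⟨hw₁, hw₂, hw₀⟩ =>
  ⟨by simpa [Phi] using mul_lt_of_lt_one_left (norm_pos_iff.2 hw₀) hw₁, hw₂⟩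

lemma mapsTo_PhiInv : MapsTo PhiInv Hartogs diskPunct := by
  intro z hz
  have hz₂ := snd_ne_zero_of_mem_Hartogs hz
  refine ⟨?_, hz.2, hz₂⟩
  simpa [PhiInv, norm_div, div_lt_one (norm_pos_iff.2 hz₂)] using hz.1

lemma diskPunct_subset_diskProd : diskPunct ⊆ diskProd := fun _ hw => ⟨hw.1, hw.2.1⟩

lemma differentiableOn_PhiInv : DifferentiableOn ℂ PhiInv Hartogs := by
  intro z hz
  have h₁ : DifferentiableAt ℂ (fun z : ℂ × ℂ => z.1 / z.2) z := by
    fun_prop (disch := exact snd_ne_zero_of_mem_Hartogs hz)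
  exact (h₁.prodMk differentiableAt_snd).differentiableWithinAt

/-- `f ↦ f∘Φ` is a surjective isometry from the Dirichlet space `D(ℍ)`
(holomorphic `f = Σ_{j≥0,k≥−j} a_{jk} z₁ʲz₂ᵏ` with
`‖f‖² = Σ (j+1)(j+k+1)|a_{jk}|² < ∞`) onto the Dirichlet space `D(𝔻×𝔻)` of the bidisc
(holomorphic `g = Σ_{j,k≥0} b_{jk} w₁ʲw₂ᵏ` with `‖g‖² = Σ (j+1)(k+1)|b_{jk}|² < ∞`):
`f∘Φ` has only nonnegative powers of `w₂`, extends holomorphically to `𝔻×𝔻` with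
coefficients `b_{jk} = a_{j,k−j}`, `‖f∘Φ‖²_{D(𝔻×𝔻)} = ‖f‖²_{D(ℍ)}`, and every
`g ∈ D(𝔻×𝔻)` arises this way. -/
theorem statement4 :
    (∀ (a : ℕ × ℤ → ℂ) (f : ℂ × ℂ → ℂ),
      (∀ jk : ℕ × ℤ, jk.2 < -(jk.1 : ℤ) → a jk = 0) →
      Summable (fun jk : ℕ × ℤ =>
        ((jk.1 : ℝ) + 1) * ((jk.1 : ℝ) + (jk.2 : ℝ) + 1) * ‖a jk‖ ^ 2) →
      (∀ z ∈ Hartogs, HasSum (fun jk : ℕ × ℤ => a jk * z.1 ^ jk.1 * z.2 ^ jk.2) (f z)) →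
      ∃ g : ℂ × ℂ → ℂ, DifferentiableOn ℂ g diskProd ∧
        (∀ w ∈ diskProd, HasSum
          (fun jk : ℕ × ℕ => a (jk.1, (jk.2 : ℤ) - (jk.1 : ℤ)) * w.1 ^ jk.1 * w.2 ^ jk.2)
          (g w)) ∧
        (∀ w ∈ diskPunct, g w = f (Phi w)) ∧
        ∑' jk : ℕ × ℕ, ((jk.1 : ℝ) + 1) * ((jk.2 : ℝ) + 1) *
            ‖a (jk.1, (jk.2 : ℤ) - (jk.1 : ℤ))‖ ^ 2 =
          ∑' jk : ℕ × ℤ, ((jk.1 : ℝ) + 1) * ((jk.1 : ℝ) + (jk.2 : ℝ) + 1) * ‖a jk‖ ^ 2) ∧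
    (∀ (b : ℕ × ℕ → ℂ) (g : ℂ × ℂ → ℂ),
      Summable (fun jk : ℕ × ℕ => ((jk.1 : ℝ) + 1) * ((jk.2 : ℝ) + 1) * ‖b jk‖ ^ 2) →
      (∀ w ∈ diskProd, HasSum (fun jk : ℕ × ℕ => b jk * w.1 ^ jk.1 * w.2 ^ jk.2) (g w)) →
      ∃ (a : ℕ × ℤ → ℂ) (f : ℂ × ℂ → ℂ),
        (∀ jk : ℕ × ℤ, jk.2 < -(jk.1 : ℤ) → a jk = 0) ∧
        Summable (fun jk : ℕ × ℤ =>
          ((jk.1 : ℝ) + 1) * ((jk.1 : ℝ) + (jk.2 : ℝ) + 1) * ‖a jk‖ ^ 2) ∧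
        DifferentiableOn ℂ f Hartogs ∧
        (∀ z ∈ Hartogs, HasSum (fun jk : ℕ × ℤ => a jk * z.1 ^ jk.1 * z.2 ^ jk.2) (f z)) ∧
        (∀ w ∈ diskPunct, g w = f (Phi w)) ∧
        ∑' jk : ℕ × ℕ, ((jk.1 : ℝ) + 1) * ((jk.2 : ℝ) + 1) * ‖b jk‖ ^ 2 =
          ∑' jk : ℕ × ℤ, ((jk.1 : ℝ) + 1) * ((jk.1 : ℝ) + (jk.2 : ℝ) + 1) * ‖a jk‖ ^ 2) := by
  refine ⟨fun a f ha hsum hf => ?_, fun b g hb hg => ?_⟩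
  · obtain ⟨C, hC⟩ := exists_norm_le_of_summable_bidiscDirichletTerm
      ((summable_bidiscDirichletTerm_comp_shear_iff ha).2 hsum)
    refine ⟨_, differentiableOn_tsum_coeff_mul_pow_mul_pow hC,
      fun w hw => hasSum_coeff_mul_pow_mul_pow hC hw, fun w hw => ?_,
      tsum_bidiscDirichletTerm_comp_shear ha⟩
    exact ((hasSum_comp_Phi_iff ha hw.2.2).1 (hf _ (mapsTo_Phi hw))).tsum_eq
  · obtain ⟨a, rfl, ha⟩ := exists_comp_shear_eq b
    obtain ⟨C, hC⟩ := exists_norm_le_of_summable_bidiscDirichletTerm hb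
    refine ⟨a, (fun w => ∑' p : ℕ × ℕ, (a ∘ shear) p * w.1 ^ p.1 * w.2 ^ p.2) ∘ PhiInv, ha,
      (summable_bidiscDirichletTerm_comp_shear_iff ha).1 hb,
      ?_, fun z hz => ?_, fun w hw => ?_, tsum_bidiscDirichletTerm_comp_shear ha⟩
    · exact (differentiableOn_tsum_coeff_mul_pow_mul_pow hC).comp differentiableOn_PhiInv
        (mapsTo_PhiInv.mono_right diskPunct_subset_diskProd)
    · have hw := mapsTo_PhiInv hz
      have := (hasSum_comp_Phi_iff ha hw.2.2).2
        (hasSum_coeff_mul_pow_mul_pow hC (diskPunct_subset_diskProd hw))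
      rwa [Phi_PhiInv (snd_ne_zero_of_mem_Hartogs hz)] at this
    · rw [Function.comp_apply, PhiInv_Phi hw.2.2]
      exact (hg w (diskPunct_subset_diskProd hw)).unique
        (hasSum_coeff_mul_pow_mul_pow hC (diskPunct_subset_diskProd hw))
end
end

section
/- Let ν > −1 and let K_ν denote the reproducing kernel of A²_ν(ℍ). There exists a constant c_ν > 0 such that for all ((z₁,z₂),(w₁,w₂)) ∈ ℍ × ℍ, |K_ν((z₁,z₂),(w₁,w₂))| ≤ c_ν |z₂\overline{w₂}|^{−1−⌈ν/2⌉} |1 − (z₁\overline{w₁})/(z₂\overline{w₂})|^{−(ν+2)} |1 − z₂\overline{w₂}|^{−(ν+2)}, where ⌈·⌉ is the ceiling function. -/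
open MeasureTheory Real Complex Set Filter
open scoped ENNReal

noncomputable section

/-- The weight `|z₂|^ν (1−|z₁/z₂|²)^ν (1−|z₂|²)^ν`. -/
def hDensity (ν : ℝ) (z : ℂ × ℂ) : ℝ :=
  ‖z.2‖ ^ ν * (1 - ‖z.1 / z.2‖ ^ 2) ^ ν * (1 - ‖z.2‖ ^ 2) ^ ν

/-- The normalization constant `C_ν`. -/
def Cnu (ν : ℝ) : ℝ :=
  ((ν + 1) * Real.Gamma (3 / 2 * ν + 3)) /
    (2 ^ (ν / 2) * π ^ 2 * Real.Gamma (ν + 1) * Real.Gamma (ν / 2 + 2))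

/-- The measure `dμ_ν = C_ν 2^{ν/2} |z₂|^ν (1−|z₁/z₂|²)^ν (1−|z₂|²)^ν dz` on `ℍ`. -/
def muNu (ν : ℝ) : Measure (ℂ × ℂ) :=
  (volume.restrict Hartogs).withDensity
    fun z => ENNReal.ofReal (Cnu ν * 2 ^ (ν / 2) * hDensity ν z)

/-- The hypergeometric function
`F(α,β;γ;z) = (Γ(γ)/(Γ(α)Γ(β))) Σ_{k≥0} Γ(k+α)Γ(k+β)/(Γ(k+γ)k!) zᵏ`. -/
def hyperF (α β γ z : ℂ) : ℂ :=
  (Complex.Gamma γ / (Complex.Gamma α * Complex.Gamma β)) *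
    ∑' k : ℕ, Complex.Gamma ((k : ℂ) + α) * Complex.Gamma ((k : ℂ) + β) /
      (Complex.Gamma ((k : ℂ) + γ) * (Nat.factorial k : ℂ)) * z ^ k

/-- The constant `a_ν = Γ(ν/2+2)Γ((3/2)ν−⌈ν/2⌉+2)/(Γ((3/2)ν+3)Γ(ν/2−⌈ν/2⌉+1))`. -/
def aNu (ν : ℝ) : ℝ :=
  Real.Gamma (ν / 2 + 2) * Real.Gamma (3 / 2 * ν - (⌈ν / 2⌉ : ℝ) + 2) /
    (Real.Gamma (3 / 2 * ν + 3) * Real.Gamma (ν / 2 - (⌈ν / 2⌉ : ℝ) + 1))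

/-- The reproducing kernel of `A²_ν(ℍ)`:
`K_ν(z,w) = a_ν (z₂w̄₂)^{−1−⌈ν/2⌉} (1 − z₁w̄₁/(z₂w̄₂))^{−(ν+2)}
F((3/2)ν−⌈ν/2⌉+2, 1; ν/2−⌈ν/2⌉+1; z₂w̄₂)`. -/
def KNu (ν : ℝ) (z w : ℂ × ℂ) : ℂ :=
  (aNu ν : ℂ) * (z.2 * (starRingEnd ℂ) w.2) ^ (-1 - ⌈ν / 2⌉ : ℤ) *
    (1 - z.1 * (starRingEnd ℂ) w.1 / (z.2 * (starRingEnd ℂ) w.2)) ^ ((-(ν + 2) : ℝ) : ℂ) *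
    hyperF ((3 / 2 * ν - (⌈ν / 2⌉ : ℝ) + 2 : ℝ) : ℂ) 1 ((ν / 2 - (⌈ν / 2⌉ : ℝ) + 1 : ℝ) : ℂ)
      (z.2 * (starRingEnd ℂ) w.2)

/-!
Apart from the factor `F(A, 1; g; q)`, with `A = (3/2)ν − ⌈ν/2⌉ + 2` and `g = ν/2 − ⌈ν/2⌉ + 1`,
the kernel already has the claimed shape, and `A − g + 1 = ν + 2`. The coefficient recurrence of
`F = Σ (A)ₙ/(g)ₙ qⁿ` is the equation `q(1 − q)F' + (g − 1 − Aq)F = g − 1`, so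
`E = (1 − q)^{A−g+1} F` solves `qE' + (g − 1)E = (g − 1)(1 − q)^{A−g}`. Hence
`(n + g − 1) eₙ = (g − 1) [qⁿ](1 − q)^{A−g}`, and since `A − g = ν + 1 > 0` the binomial
coefficients on the right are absolutely summable. So `F = (1 − q)^{−(ν+2)} E` (Euler's
transformation) with `|E| ≤ Σ |eₙ|` on the unit disc.
-/

open PowerSeries

namespace Ring

lemma succ_mul_choose_succ {R : Type*} [CommRing R] [BinomialRing R] (r : R) (n : ℕ) :
    (n + 1) * choose r (n + 1) = (r - n) * choose r n := by
  simpa [choose_one_right, Nat.cast_smul_eq_nsmul, mul_comm] using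
    choose_smul_choose r (Nat.le_succ n)

lemma succ_mul_choose_succ_eq_mul_choose_sub_one {R : Type*} [CommRing R] [BinomialRing R]
    (r : R) (n : ℕ) : (n + 1) * choose r (n + 1) = r * choose (r - 1) n := by
  simpa [choose_one_right, Nat.cast_smul_eq_nsmul] using
    choose_smul_choose r (Nat.le_add_left 1 n)

lemma summable_abs_choose {t : ℝ} (ht : 0 < t) : Summable fun n => |choose t n| := by
  set N := ⌈t⌉₊
  set b : ℕ → ℝ := fun n => |choose t n|
  -- `(n + 1) bₙ₊₁ = (n - t) bₙ` for `n ≥ t`, so the terms `t bₙ` telescope.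
  have hstep : ∀ n, N ≤ n → t * b n = n * b n - (n + 1) * b (n + 1) := by
    intro n hn
    have htn : t ≤ n := (Nat.le_ceil t).trans (by exact_mod_cast hn)
    have h := congrArg abs (succ_mul_choose_succ t n)
    rw [abs_mul, abs_mul, abs_of_pos (by positivity : (0 : ℝ) < n + 1),
      abs_of_nonpos (by linarith : t - n ≤ 0)] at h
    simp only [b]
    linear_combination h
  have hsum : ∀ m, t * ∑ i ∈ Finset.range m, b (i + N) = N * b N - (m + N) * b (m + N) := by
    intro m
    induction m with
    | zero => simp
    | succ m ih =>
      rw [Finset.sum_range_succ, mul_add, ih, hstep _ (Nat.le_add_left N m),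
        Nat.add_right_comm m 1 N]
      push_cast
      ring
  refine (summable_nat_add_iff N).mp
    (summable_of_sum_range_le (c := N * b N / t) (fun i => abs_nonneg _) fun m => ?_)
  rw [le_div_iff₀ ht, mul_comm, hsum m]
  have : 0 ≤ (m + N : ℝ) * b (m + N) := by positivity
  linarith

end Ring

namespace Complex

lemma add_natCast_ne_neg_natCast {c : ℂ} (hc : ∀ k : ℕ, c ≠ -k) (n k : ℕ) : c + n ≠ -k :=
  fun h => hc (n + k) (by push_cast; linear_combination h)

lemma ofReal_ne_neg_natCast {c : ℝ} (hc : 0 < c) (k : ℕ) : (c : ℂ) ≠ -k := by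
  intro h
  have := congrArg re h
  simp only [ofReal_re, neg_re, natCast_re] at this
  linarith [(Nat.cast_nonneg k : (0 : ℝ) ≤ k)]

end Complex

namespace PowerSeries

lemma coeff_X_mul_derivative {R : Type*} [CommSemiring R] (f : R⟦X⟧) (n : ℕ) :
    coeff n (X * d⁄dX R f) = n * coeff n f := by
  rcases n with _ | n
  · simp
  · rw [coeff_succ_X_mul, coeff_derivative, mul_comm]
    push_cast
    rfl

lemma tsum_coeff_mul_mul_pow {R : Type*} [NormedCommRing R] [CompleteSpace R] {f g : R⟦X⟧}
    {q : R} (hf : Summable fun n => ‖coeff n f * q ^ n‖)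
    (hg : Summable fun n => ‖coeff n g * q ^ n‖) :
    ∑' n, coeff n (f * g) * q ^ n = (∑' n, coeff n f * q ^ n) * ∑' n, coeff n g * q ^ n := by
  rw [tsum_mul_tsum_eq_tsum_sum_antidiagonal_of_summable_norm hf hg]
  refine tsum_congr fun n => ?_
  rw [coeff_mul, Finset.sum_mul]
  refine Finset.sum_congr rfl fun ij hij => ?_
  rw [← Finset.HasAntidiagonal.mem_antidiagonal.mp hij, pow_add]
  ring

def oneSubPow (r : ℂ) : ℂ⟦X⟧ := rescale (-1) (binomialSeries ℂ r)

lemma coeff_oneSubPow (r : ℂ) (n : ℕ) :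
    coeff n (oneSubPow r) = (-1) ^ n * Ring.choose r n := by
  simp [oneSubPow, coeff_rescale]

lemma oneSubPow_add (r s : ℂ) : oneSubPow (r + s) = oneSubPow r * oneSubPow s := by
  simp [oneSubPow]

lemma oneSubPow_zero : oneSubPow 0 = 1 := by
  simp [oneSubPow]

lemma oneSubPow_one : oneSubPow 1 = 1 - X := by
  simpa [oneSubPow, rescale_X, sub_eq_add_neg] using
    congrArg (rescale (-1 : ℂ)) (binomialSeries_nat (R := ℂ) (A := ℂ) 1)

lemma derivative_oneSubPow (r : ℂ) : d⁄dX ℂ (oneSubPow r) = C (-r) * oneSubPow (r - 1) := by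
  ext n
  rw [coeff_derivative, coeff_C_mul, coeff_oneSubPow, coeff_oneSubPow, pow_succ, mul_assoc,
    mul_assoc, mul_comm _ ((n : ℂ) + 1), Ring.succ_mul_choose_succ_eq_mul_choose_sub_one]
  ring

lemma coeff_oneSubPow_mul_pow (r q : ℂ) (n : ℕ) :
    coeff n (oneSubPow r) * q ^ n = _root_.binomialSeries ℂ r n (fun _ => -q) := by
  rw [coeff_oneSubPow, _root_.binomialSeries, FormalMultilinearSeries.ofScalars_apply_eq,
    smul_eq_mul, neg_pow]
  ring

lemma hasSum_coeff_oneSubPow_mul_pow (r : ℂ) {q : ℂ} (hq : ‖q‖ < 1) :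
    HasSum (fun n => coeff n (oneSubPow r) * q ^ n) ((1 - q) ^ r) := by
  have h := (Complex.one_add_cpow_hasFPowerSeriesOnBall_zero (a := r)).hasSum (y := -q)
    (by simpa [enorm_eq_nnnorm, ← NNReal.coe_lt_one] using hq)
  simpa [coeff_oneSubPow_mul_pow, sub_eq_add_neg] using h

lemma summable_norm_coeff_oneSubPow_mul_pow (r : ℂ) {q : ℂ} (hq : ‖q‖ < 1) :
    Summable fun n => ‖coeff n (oneSubPow r) * q ^ n‖ := by
  simp only [coeff_oneSubPow_mul_pow]
  refine (_root_.binomialSeries ℂ r).summable_norm_apply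
    (lt_of_lt_of_le ?_ binomialSeries_radius_ge_one)
  simpa [enorm_eq_nnnorm, ← NNReal.coe_lt_one] using hq

def hyperFSeries (a c : ℂ) : ℂ⟦X⟧ :=
  mk fun n => (ascPochhammer ℂ n).eval a / (ascPochhammer ℂ n).eval c

lemma coeff_hyperFSeries_succ {a c : ℂ} (hc : ∀ k : ℕ, c ≠ -k) (n : ℕ) :
    (c + n) * coeff (n + 1) (hyperFSeries a c) = (a + n) * coeff n (hyperFSeries a c) := by
  have hcn : c + n ≠ 0 := fun h => hc n (eq_neg_of_add_eq_zero_left h)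
  have hpoch : (ascPochhammer ℂ n).eval c ≠ 0 := by
    rw [Ne, ascPochhammer_eval_eq_zero_iff]
    rintro ⟨k, -, hk⟩
    exact hc k (by rw [hk, neg_neg])
  simp only [hyperFSeries, coeff_mk, ascPochhammer_succ_eval]
  field_simp

lemma hyperFSeries_ode {a c : ℂ} (hc : ∀ k : ℕ, c ≠ -k) :
    (1 - X) * (X * d⁄dX ℂ (hyperFSeries a c)) =
      C (1 - c) * hyperFSeries a c + C a * (X * hyperFSeries a c) + C (c - 1) := by
  ext n
  rcases n with _ | n
  · simp [hyperFSeries, sub_mul]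
  · simp only [sub_mul, one_mul, map_sub, map_add, coeff_succ_X_mul, coeff_derivative,
      coeff_X_mul_derivative, coeff_C_mul, coeff_C, if_neg n.succ_ne_zero]
    linear_combination coeff_hyperFSeries_succ (a := a) hc n

-- By Euler's transformation this is the series of `F(c - a, c - 1; c; X)`.
def eulerSeries (a c : ℂ) : ℂ⟦X⟧ := oneSubPow (a - c + 1) * hyperFSeries a c

lemma hyperFSeries_eq_oneSubPow_mul_eulerSeries (a c : ℂ) :
    hyperFSeries a c = oneSubPow (-(a - c + 1)) * eulerSeries a c := by
  rw [eulerSeries, ← mul_assoc, ← oneSubPow_add, neg_add_cancel, oneSubPow_zero, one_mul]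

lemma eulerSeries_ode {a c : ℂ} (hc : ∀ k : ℕ, c ≠ -k) :
    X * d⁄dX ℂ (eulerSeries a c) + C (c - 1) * eulerSeries a c =
      C (c - 1) * oneSubPow (a - c) := by
  have hP : oneSubPow (a - c + 1) = oneSubPow (a - c) * (1 - X) := by
    rw [oneSubPow_add, oneSubPow_one]
  have hdP : d⁄dX ℂ (oneSubPow (a - c + 1)) = C (-(a - c + 1)) * oneSubPow (a - c) := by
    rw [derivative_oneSubPow, add_sub_cancel_right]
  have hF := hyperFSeries_ode (a := a) hc
  simp only [map_sub, map_add, map_neg, map_one] at hF hdP ⊢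
  rw [eulerSeries, Derivation.leibniz, smul_eq_mul, smul_eq_mul, hdP, hP]
  linear_combination oneSubPow (a - c) * hF

lemma coeff_eulerSeries {a c : ℂ} (hc : ∀ k : ℕ, c ≠ -k) (n : ℕ) :
    (n + c - 1) * coeff n (eulerSeries a c) = (c - 1) * coeff n (oneSubPow (a - c)) := by
  have := congrArg (coeff n) (eulerSeries_ode (a := a) hc)
  rw [map_add, coeff_X_mul_derivative, coeff_C_mul, coeff_C_mul] at this
  linear_combination this

lemma summable_norm_coeff_eulerSeries {a c : ℝ} (hc : 0 < c) (hca : c < a) :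
    Summable fun n => ‖coeff n (eulerSeries a c)‖ := by
  refine Summable.of_norm_bounded_eventually_nat
    ((Ring.summable_abs_choose (sub_pos.mpr hca)).mul_left (|c - 1| / c)) ?_
  filter_upwards [Filter.eventually_ge_atTop 1] with n hn
  have h := congrArg norm (coeff_eulerSeries (a := a) (ofReal_ne_neg_natCast hc) n)
  rw [norm_mul, norm_mul, coeff_oneSubPow, norm_mul, norm_pow, norm_neg, norm_one, one_pow,
    one_mul, ← Complex.ofReal_sub, ← Complex.ofReal_choose, Complex.norm_real,
    Real.norm_eq_abs] at h
  have hn' : c ≤ ‖(n : ℂ) + c - 1‖ := by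
    have : (1 : ℝ) ≤ n := by exact_mod_cast hn
    rw [show (n : ℂ) + c - 1 = ((n + c - 1 : ℝ) : ℂ) by push_cast; ring, Complex.norm_real,
      Real.norm_eq_abs, abs_of_pos (by linarith)]
    linarith
  rw [norm_norm, div_mul_eq_mul_div, le_div_iff₀ hc]
  calc ‖coeff n (eulerSeries a c)‖ * c
      ≤ ‖coeff n (eulerSeries a c)‖ * ‖(n : ℂ) + c - 1‖ :=
        mul_le_mul_of_nonneg_left hn' (norm_nonneg _)
    _ = |c - 1| * |Ring.choose (a - c) n| := by
      rw [mul_comm, h, ← Complex.ofReal_one, ← Complex.ofReal_sub, Complex.norm_real,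
        Real.norm_eq_abs]

end PowerSeries

lemma hyperF_eq_tsum {a c : ℂ} (ha : ∀ k : ℕ, a ≠ -k) (hc : ∀ k : ℕ, c ≠ -k) (q : ℂ) :
    hyperF a 1 c q = ∑' n, coeff n (hyperFSeries a c) * q ^ n := by
  rw [hyperF, ← tsum_mul_left]
  refine tsum_congr fun n => ?_
  have hΓa := Complex.Gamma_ne_zero ha
  have hΓc := Complex.Gamma_ne_zero hc
  have hΓcn := Complex.Gamma_ne_zero (add_natCast_ne_neg_natCast hc n)
  have hfact : (n.factorial : ℂ) ≠ 0 := by exact_mod_cast n.factorial_ne_zero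
  rw [hyperFSeries, coeff_mk, ← Complex.Gamma_add_nat_div_Gamma_eq a ha,
    ← Complex.Gamma_add_nat_div_Gamma_eq c hc, Complex.Gamma_one, Complex.Gamma_nat_eq_factorial,
    add_comm a, add_comm c]
  field_simp

lemma hyperF_eq_cpow_mul_tsum {a c : ℂ} (ha : ∀ k : ℕ, a ≠ -k) (hc : ∀ k : ℕ, c ≠ -k)
    {q : ℂ} (hq : ‖q‖ < 1) (hE : Summable fun n => ‖coeff n (eulerSeries a c) * q ^ n‖) :
    hyperF a 1 c q = (1 - q) ^ (-(a - c + 1)) * ∑' n, coeff n (eulerSeries a c) * q ^ n := by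
  rw [hyperF_eq_tsum ha hc, hyperFSeries_eq_oneSubPow_mul_eulerSeries,
    tsum_coeff_mul_mul_pow (summable_norm_coeff_oneSubPow_mul_pow _ hq) hE,
    (hasSum_coeff_oneSubPow_mul_pow _ hq).tsum_eq]

theorem norm_hyperF_le {a c : ℝ} (hc : 0 < c) (hca : c < a) {q : ℂ} (hq : ‖q‖ < 1) :
    ‖hyperF a 1 c q‖ ≤ (∑' n, ‖coeff n (eulerSeries a c)‖) * ‖1 - q‖ ^ (-(a - c + 1)) := by
  have hE := summable_norm_coeff_eulerSeries hc hca
  have hle : ∀ n, ‖coeff n (eulerSeries a c) * q ^ n‖ ≤ ‖coeff n (eulerSeries a c)‖ := fun n => by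
    rw [norm_mul, norm_pow]
    exact mul_le_of_le_one_right (norm_nonneg _) (pow_le_one₀ (norm_nonneg _) hq.le)
  have hEq := hE.of_nonneg_of_le (fun _ => norm_nonneg _) hle
  rw [hyperF_eq_cpow_mul_tsum (ofReal_ne_neg_natCast (hc.trans hca)) (ofReal_ne_neg_natCast hc)
      hq hEq, norm_mul, mul_comm,
    show -((a : ℂ) - c + 1) = ((-(a - c + 1) : ℝ) : ℂ) by push_cast; ring, Complex.norm_cpow_real]
  gcongr
  exact (norm_tsum_le_tsum_norm hEq).trans (hEq.tsum_le_tsum hle hE)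

/-- for `ν > −1` there is `c_ν > 0` such that for all `z, w ∈ ℍ`,
`|K_ν(z,w)| ≤ c_ν |z₂w̄₂|^{−1−⌈ν/2⌉} |1 − z₁w̄₁/(z₂w̄₂)|^{−(ν+2)} |1 − z₂w̄₂|^{−(ν+2)}`. -/
theorem statement11 (ν : ℝ) (hν : -1 < ν) :
    ∃ c : ℝ, 0 < c ∧ ∀ z ∈ Hartogs, ∀ w ∈ Hartogs,
      ‖KNu ν z w‖ ≤
        c * ‖z.2 * (starRingEnd ℂ) w.2‖ ^ (-1 - ⌈ν / 2⌉ : ℤ) *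
          ‖1 - z.1 * (starRingEnd ℂ) w.1 / (z.2 * (starRingEnd ℂ) w.2)‖ ^ (-(ν + 2)) *
          ‖1 - z.2 * (starRingEnd ℂ) w.2‖ ^ (-(ν + 2)) := by
  set A : ℝ := 3 / 2 * ν - (⌈ν / 2⌉ : ℝ) + 2
  set g : ℝ := ν / 2 - (⌈ν / 2⌉ : ℝ) + 1
  have hg : 0 < g := by simp only [g]; linarith [Int.ceil_lt_add_one (ν / 2)]
  have hgA : g < A := by simp only [g, A]; linarith
  set M := ∑' n, ‖coeff n (eulerSeries A g)‖
  have hM : 0 ≤ M := tsum_nonneg fun _ => norm_nonneg _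
  refine ⟨|aNu ν| * M + 1, by positivity, fun z hz w hw => ?_⟩
  set q := z.2 * (starRingEnd ℂ) w.2
  set p := z.1 * (starRingEnd ℂ) w.1 / q
  have hq : ‖q‖ < 1 := by
    rw [norm_mul, Complex.norm_conj]
    exact mul_lt_one_of_nonneg_of_lt_one_left (norm_nonneg _) hz.2 hw.2.le
  have hF := norm_hyperF_le hg hgA hq
  rw [show -(A - g + 1) = -(ν + 2) by ring] at hF
  have hK : ‖KNu ν z w‖ = |aNu ν| * ‖q‖ ^ (-1 - ⌈ν / 2⌉ : ℤ) * ‖1 - p‖ ^ (-(ν + 2)) *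
      ‖hyperF A 1 g q‖ := by
    rw [KNu, norm_mul, norm_mul, norm_mul, norm_zpow, Complex.norm_real, Real.norm_eq_abs,
      Complex.norm_cpow_real]
  calc ‖KNu ν z w‖
      ≤ |aNu ν| * ‖q‖ ^ (-1 - ⌈ν / 2⌉ : ℤ) * ‖1 - p‖ ^ (-(ν + 2)) *
          (M * ‖1 - q‖ ^ (-(ν + 2))) := by rw [hK]; gcongr
    _ = |aNu ν| * M * ‖q‖ ^ (-1 - ⌈ν / 2⌉ : ℤ) * ‖1 - p‖ ^ (-(ν + 2)) *
          ‖1 - q‖ ^ (-(ν + 2)) := by ring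
    _ ≤ _ := by gcongr; linarith
end
end
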